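/- Let A : ℝ^{p₁×p₂} → ℝⁿ be a linear map satisfying the 2r-restricted isometry property with constant R_{2r} < 1, i.e., (1−R_{2r})‖Z‖_F² ≤ ‖A(Z)‖₂² ≤ (1+R_{2r})‖Z‖_F² for all matrices Z of rank at most 2r. Let U ∈ 𝕆_{p₁,r}, V ∈ 𝕆_{p₂,r}, and define the linear map L sending a block matrix W = [[W₀, W₂],[W₁, 0]] (W₀ ∈ ℝ^{r×r}, W₂ ∈ ℝ^{r×(p₂−r)}, W₁ ∈ ℝ^{(p₁−r)×r}) to [U, U⊥] W [V, V⊥]ᵀ. Then for every matrix M in the range of L*, (1−R_{2r})‖M‖_F ≤ ‖L* A* A L(M)‖_F ≤ (1+R_{2r})‖M‖_F. -/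

import Mathlib

open Matrix
noncomputable section

/-- Frobenius norm of a real matrix. -/
def frob {m n : Type*} [Fintype m] [Fintype n] (A : Matrix m n ℝ) : ℝ :=
  Real.sqrt (∑ i, ∑ j, (A i j) ^ 2)

/-- Spectral (operator ℓ²→ℓ²) norm of a real matrix. -/
def spec {m n : Type*} [Fintype m] [Fintype n] [DecidableEq n] (A : Matrix m n ℝ) : ℝ :=
  ‖LinearMap.toContinuousLinearMap (Matrix.toEuclideanLin A)‖

theorem Matrix.isHermitian_transpose_mul_self {m n α : Type*} [CommSemiring α] [StarRing α]
    [TrivialStar α] [Fintype m] (A : Matrix m n α) : (Aᵀ * A).IsHermitian := by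
  rw [IsHermitian, conjTranspose_eq_transpose_of_trivial, transpose_mul, transpose_transpose]

/-- Nuclear norm: sum of singular values (square roots of eigenvalues of AᵀA). -/
def nuc {m n : Type*} [Fintype m] [Fintype n] [DecidableEq n] (A : Matrix m n ℝ) : ℝ :=
  ∑ i, Real.sqrt ((Matrix.isHermitian_transpose_mul_self A).eigenvalues i)

/-!
On the block matrices with vanishing lower-right block, `L` is a Frobenius isometry into matrices
of rank at most `2r`, so `A ∘ L` has the restricted isometry property there with constant `R₂ᵣ`.
Polarization upgrades this to `⟪A L x, A L y⟫ - ⟪x, y⟫ ≤ R₂ᵣ ‖x‖ ‖y‖` on that subspace, and since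
`L*` is adjoint to `L` there, `v = L* A* A L M - M` satisfies `⟪v, y⟫ = ⟪A L M, A L y⟫ - ⟪M, y⟫`.
Taking `y = v` gives `‖L* A* A L M - M‖ ≤ R₂ᵣ ‖M‖`; both bounds follow by the triangle inequality.
-/

open scoped RealInnerProductSpace

section RestrictedIsometry

variable {E F : Type*} [NormedAddCommGroup E] [InnerProductSpace ℝ E]
  [NormedAddCommGroup F] [InnerProductSpace ℝ F]

def RestrictedIsometryOn (S : Submodule ℝ E) (f : E →ₗ[ℝ] F) (R : ℝ) : Prop :=
  ∀ x ∈ S, (1 - R) * ‖x‖ ^ 2 ≤ ‖f x‖ ^ 2 ∧ ‖f x‖ ^ 2 ≤ (1 + R) * ‖x‖ ^ 2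

namespace RestrictedIsometryOn

variable {S : Submodule ℝ E} {f : E →ₗ[ℝ] F} {R : ℝ} {x y v : E}

theorem inner_sub_inner_le_of_norm_eq (h : RestrictedIsometryOn S f R) (hx : x ∈ S) (hy : y ∈ S)
    (hxy : ‖x‖ = ‖y‖) : ⟪f x, f y⟫ - ⟪x, y⟫ ≤ R * ‖y‖ ^ 2 := by
  have hadd := (h (x + y) (S.add_mem hx hy)).2
  have hsub := (h (x - y) (S.sub_mem hx hy)).1
  rw [map_add, norm_add_sq_real, norm_add_sq_real] at hadd
  rw [map_sub, norm_sub_sq_real, norm_sub_sq_real] at hsub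
  rw [hxy] at hadd hsub
  linarith

theorem inner_sub_inner_le (h : RestrictedIsometryOn S f R) (hx : x ∈ S) (hy : y ∈ S) :
    ⟪f x, f y⟫ - ⟪x, y⟫ ≤ R * (‖x‖ * ‖y‖) := by
  rcases eq_or_ne x 0 with rfl | hx0
  · simp
  rcases eq_or_ne y 0 with rfl | hy0
  · simp
  set t := ‖y‖ / ‖x‖
  have htpos : 0 < t := div_pos (norm_pos_iff.2 hy0) (norm_pos_iff.2 hx0)
  have hty : t * ‖x‖ = ‖y‖ := div_mul_cancel₀ _ (norm_ne_zero_iff.2 hx0)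
  have htx : ‖t • x‖ = ‖y‖ := by rw [norm_smul, Real.norm_of_nonneg htpos.le, hty]
  have := h.inner_sub_inner_le_of_norm_eq (S.smul_mem t hx) hy htx
  rw [map_smul, real_inner_smul_left, real_inner_smul_left, ← hty] at this
  refine le_of_mul_le_mul_left ?_ htpos
  rw [← hty]
  linear_combination this

theorem norm_le_of_inner_eq (h : RestrictedIsometryOn S f R) (hx : x ∈ S) (hv : v ∈ S)
    (hvx : ∀ y ∈ S, ⟪v, y⟫ = ⟪f x, f y⟫ - ⟪x, y⟫) : ‖v‖ ≤ R * ‖x‖ := by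
  have hvv : ‖v‖ ^ 2 ≤ R * (‖x‖ * ‖v‖) := by
    rw [← real_inner_self_eq_norm_sq, hvx v hv]
    exact h.inner_sub_inner_le hx hv
  rcases (norm_nonneg v).eq_or_lt with hv0 | hv0
  · rw [← hv0]
    rcases (norm_nonneg x).eq_or_lt with hx0 | hx0
    · rw [← hx0, mul_zero]
    · have := h x hx
      nlinarith
  · nlinarith

end RestrictedIsometryOn

end RestrictedIsometry

attribute [local instance] Matrix.frobeniusNormedAddCommGroup Matrix.frobeniusNormedSpace

theorem Matrix.frobenius_norm_sq_eq_sum {m n : Type*} [Fintype m] [Fintype n]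
    (X : Matrix m n ℝ) : ‖X‖ ^ 2 = ∑ i, ∑ j, X i j ^ 2 := by
  change ‖WithLp.toLp 2 fun i => WithLp.toLp 2 (X i)‖ ^ 2 = _
  simp [PiLp.norm_sq_eq_of_L2]

@[reducible]
def Matrix.frobeniusInnerProductSpace {m n : Type*} [Fintype m] [Fintype n] :
    InnerProductSpace ℝ (Matrix m n ℝ) where
  inner X Y := ∑ i, ∑ j, X i j * Y i j
  norm_sq_eq_re_inner X := by simp [frobenius_norm_sq_eq_sum, ← sq]
  conj_inner_symm X Y := by simp [mul_comm]
  add_left X Y Z := by simp [add_mul, Finset.sum_add_distrib]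
  smul_left X Y c := by simp [Finset.mul_sum, mul_assoc]

attribute [local instance] Matrix.frobeniusInnerProductSpace

namespace Matrix

section Frobenius

variable {m n p q : Type*} [Fintype m] [Fintype n] [Fintype p] [Fintype q]

theorem frobenius_inner_def (X Y : Matrix m n ℝ) : ⟪X, Y⟫ = ∑ i, ∑ j, X i j * Y i j := rfl

theorem frob_eq_frobenius_norm (X : Matrix m n ℝ) : frob X = ‖X‖ := by
  rw [frob, ← frobenius_norm_sq_eq_sum, Real.sqrt_sq (norm_nonneg X)]

theorem frobenius_inner_eq_trace (X Y : Matrix m n ℝ) : ⟪X, Y⟫ = trace (Xᵀ * Y) := by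
  simp only [frobenius_inner_def, trace, diag, mul_apply, transpose_apply]
  exact Finset.sum_comm

theorem frobenius_inner_mul_mul_transpose (Q : Matrix p m ℝ) (W : Matrix m n ℝ)
    (P : Matrix q n ℝ) (Y : Matrix p q ℝ) : ⟪Q * W * Pᵀ, Y⟫ = ⟪W, Qᵀ * Y * P⟫ := by
  rw [frobenius_inner_eq_trace, frobenius_inner_eq_trace, transpose_mul, transpose_mul,
    transpose_transpose, Matrix.mul_assoc, trace_mul_comm]
  simp only [Matrix.mul_assoc]

theorem frobenius_norm_mul_mul_transpose [DecidableEq m] [DecidableEq n] {Q : Matrix p m ℝ}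
    {P : Matrix q n ℝ} (hQ : Qᵀ * Q = 1) (hP : Pᵀ * P = 1) (W : Matrix m n ℝ) :
    ‖Q * W * Pᵀ‖ = ‖W‖ := by
  rw [← sq_eq_sq₀ (norm_nonneg _) (norm_nonneg _), ← real_inner_self_eq_norm_sq,
    frobenius_inner_mul_mul_transpose, Matrix.mul_assoc, Matrix.mul_assoc, hP, Matrix.mul_one,
    ← Matrix.mul_assoc, hQ, Matrix.one_mul, real_inner_self_eq_norm_sq]

end Frobenius

section LowerRightZero

def lowerRightZeroSubmodule (R ι₁ ι₂ κ₁ κ₂ : Type*) [Semiring R] :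
    Submodule R (Matrix (ι₁ ⊕ ι₂) (κ₁ ⊕ κ₂) R) where
  carrier := {W | ∀ i j, W (.inr i) (.inr j) = 0}
  add_mem' hX hY i j := by simp [hX i j, hY i j]
  zero_mem' _ _ := rfl
  smul_mem' c X hX i j := by simp [hX i j]

variable {R ι₁ ι₂ κ₁ κ₂ : Type*}

theorem mem_lowerRightZeroSubmodule [Semiring R] {W : Matrix (ι₁ ⊕ ι₂) (κ₁ ⊕ κ₂) R} :
    W ∈ lowerRightZeroSubmodule R ι₁ ι₂ κ₁ κ₂ ↔ ∀ i j, W (.inr i) (.inr j) = 0 :=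
  Iff.rfl

theorem fromBlocks_mem_lowerRightZeroSubmodule [Semiring R] (a : Matrix ι₁ κ₁ R)
    (b : Matrix ι₁ κ₂ R) (c : Matrix ι₂ κ₁ R) :
    fromBlocks a b c 0 ∈ lowerRightZeroSubmodule R ι₁ ι₂ κ₁ κ₂ := fun _ _ => rfl

variable [Fintype ι₁] [Fintype κ₁] [Fintype κ₂]

theorem rank_le_of_mem_lowerRightZeroSubmodule [CommRing R] [StrongRankCondition R]
    [DecidableEq ι₁] [DecidableEq κ₁] {W : Matrix (ι₁ ⊕ ι₂) (κ₁ ⊕ κ₂) R}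
    (hW : W ∈ lowerRightZeroSubmodule R ι₁ ι₂ κ₁ κ₂) :
    W.rank ≤ Fintype.card ι₁ + Fintype.card κ₁ := by
  have hfac : W = fromBlocks (1 : Matrix ι₁ ι₁ R) 0 0 W.toBlocks₂₁ *
      fromBlocks W.toBlocks₁₁ W.toBlocks₁₂ (1 : Matrix κ₁ κ₁ R) (0 : Matrix κ₁ κ₂ R) := by
    rw [fromBlocks_multiply]
    ext (i | i) (j | j) <;>
      simp [toBlocks₁₁, toBlocks₁₂, toBlocks₂₁, mem_lowerRightZeroSubmodule.1 hW]
  rw [hfac]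
  refine (rank_mul_le_right _ _).trans ((rank_le_card_height _).trans ?_)
  simp

theorem frobenius_inner_fromBlocks_transpose_mul_mul [Fintype ι₂] {p q : Type*} [Fintype p]
    [Fintype q] (U : Matrix p ι₁ ℝ) (U' : Matrix p ι₂ ℝ) (V : Matrix q κ₁ ℝ) (V' : Matrix q κ₂ ℝ)
    (Z : Matrix p q ℝ) {W : Matrix (ι₁ ⊕ ι₂) (κ₁ ⊕ κ₂) ℝ}
    (hW : W ∈ lowerRightZeroSubmodule ℝ ι₁ ι₂ κ₁ κ₂) :
    ⟪fromBlocks (Uᵀ * Z * V) (Uᵀ * Z * V') (U'ᵀ * Z * V) 0, W⟫ =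
      ⟪Z, fromCols U U' * W * (fromCols V V')ᵀ⟫ := by
  rw [real_inner_comm _ Z, frobenius_inner_mul_mul_transpose, transpose_fromCols, fromRows_mul,
    fromRows_mul_fromCols, real_inner_comm W]
  simp [frobenius_inner_def, Fintype.sum_sum_type, mem_lowerRightZeroSubmodule.1 hW]

end LowerRightZero

end Matrix

theorem stmt_1_general {p₁ p₂ r n : ℕ}
    (A : Matrix (Fin p₁) (Fin p₂) ℝ →ₗ[ℝ] (Fin n → ℝ))
    (Astar : (Fin n → ℝ) →ₗ[ℝ] Matrix (Fin p₁) (Fin p₂) ℝ)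
    (hadj : ∀ (Z : Matrix (Fin p₁) (Fin p₂) ℝ) (v : Fin n → ℝ),
      ∑ i, A Z i * v i = ∑ i, ∑ j, Z i j * Astar v i j)
    (R2r : ℝ)
    (hRIP : ∀ Z : Matrix (Fin p₁) (Fin p₂) ℝ, Z.rank ≤ 2 * r →
      (1 - R2r) * frob Z ^ 2 ≤ ∑ i, A Z i ^ 2 ∧ ∑ i, A Z i ^ 2 ≤ (1 + R2r) * frob Z ^ 2)
    (U : Matrix (Fin p₁) (Fin r) ℝ) (Up : Matrix (Fin p₁) (Fin (p₁ - r)) ℝ)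
    (V : Matrix (Fin p₂) (Fin r) ℝ) (Vp : Matrix (Fin p₂) (Fin (p₂ - r)) ℝ)
    (hU : (fromCols U Up)ᵀ * fromCols U Up = 1)
    (hV : (fromCols V Vp)ᵀ * fromCols V Vp = 1)
    (L : Matrix (Fin r ⊕ Fin (p₁ - r)) (Fin r ⊕ Fin (p₂ - r)) ℝ → Matrix (Fin p₁) (Fin p₂) ℝ)
    (hL : ∀ W, L W = fromCols U Up * W * (fromCols V Vp)ᵀ)
    (Lstar : Matrix (Fin p₁) (Fin p₂) ℝ → Matrix (Fin r ⊕ Fin (p₁ - r)) (Fin r ⊕ Fin (p₂ - r)) ℝ)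
    (hLstar : ∀ M, Lstar M = fromBlocks (Uᵀ * M * V) (Uᵀ * M * Vp) (Upᵀ * M * V) 0) :
    ∀ M : Matrix (Fin r ⊕ Fin (p₁ - r)) (Fin r ⊕ Fin (p₂ - r)) ℝ,
      (∃ Z, M = Lstar Z) →
      (1 - R2r) * frob M ≤ frob (Lstar (Astar (A (L M)))) ∧
      frob (Lstar (Astar (A (L M)))) ≤ (1 + R2r) * frob M := by
  rintro M ⟨Z, rfl⟩
  set S := lowerRightZeroSubmodule ℝ (Fin r) (Fin (p₁ - r)) (Fin r) (Fin (p₂ - r))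
  have hLstar_mem (Y) : Lstar Y ∈ S := hLstar Y ▸ fromBlocks_mem_lowerRightZeroSubmodule _ _ _
  let f := (WithLp.linearEquiv 2 ℝ (Fin n → ℝ)).symm.toLinearMap ∘ₗ A ∘ₗ
    mulRightLinearMap _ ℝ (fromCols V Vp)ᵀ ∘ₗ mulLeftLinearMap _ ℝ (fromCols U Up)
  have hf (W) : f W = WithLp.toLp 2 (A (L W)) := by simp [f, hL]
  have hRIP_S : RestrictedIsometryOn S f R2r := by
    intro W hW
    have hrank : (L W).rank ≤ 2 * r := by
      rw [hL, two_mul]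
      refine (rank_mul_le_left _ _).trans ((rank_mul_le_right _ _).trans ?_)
      simpa using rank_le_of_mem_lowerRightZeroSubmodule hW
    simpa [hf, EuclideanSpace.real_norm_sq_eq, frob_eq_frobenius_norm, hL,
      frobenius_norm_mul_mul_transpose hU hV] using hRIP (L W) hrank
  set M := Lstar Z
  have hT (W) (hW : W ∈ S) : ⟪Lstar (Astar (A (L M))), W⟫ = ⟪f M, f W⟫ := by
    rw [hLstar (Astar _), frobenius_inner_fromBlocks_transpose_mul_mul _ _ _ _ _ hW, ← hL,
      real_inner_comm (L W), frobenius_inner_def, ← hadj, hf, hf]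
    simp [PiLp.inner_apply]
  have hclose : ‖Lstar (Astar (A (L M))) - M‖ ≤ R2r * ‖M‖ := by
    refine hRIP_S.norm_le_of_inner_eq (hLstar_mem Z) (S.sub_mem (hLstar_mem _) (hLstar_mem Z)) ?_
    intro W hW
    rw [inner_sub_left, hT W hW]
  have := abs_le.1 ((abs_norm_sub_norm_le _ _).trans hclose)
  rw [frob_eq_frobenius_norm, frob_eq_frobenius_norm]
  constructor <;> linarith

/-- Bounds for the spectrum of L* A* A L over the range of L*, under the 2r-RIP. -/
theorem stmt_1 {p₁ p₂ r n : ℕ}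
    (A : Matrix (Fin p₁) (Fin p₂) ℝ →ₗ[ℝ] (Fin n → ℝ))
    (Astar : (Fin n → ℝ) →ₗ[ℝ] Matrix (Fin p₁) (Fin p₂) ℝ)
    (hadj : ∀ (Z : Matrix (Fin p₁) (Fin p₂) ℝ) (v : Fin n → ℝ),
      ∑ i, A Z i * v i = ∑ i, ∑ j, Z i j * Astar v i j)
    (R2r : ℝ) (hR2r : R2r < 1)
    (hRIP : ∀ Z : Matrix (Fin p₁) (Fin p₂) ℝ, Z.rank ≤ 2 * r →
      (1 - R2r) * frob Z ^ 2 ≤ ∑ i, A Z i ^ 2 ∧ ∑ i, A Z i ^ 2 ≤ (1 + R2r) * frob Z ^ 2)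
    (U : Matrix (Fin p₁) (Fin r) ℝ) (Up : Matrix (Fin p₁) (Fin (p₁ - r)) ℝ)
    (V : Matrix (Fin p₂) (Fin r) ℝ) (Vp : Matrix (Fin p₂) (Fin (p₂ - r)) ℝ)
    (hU : (fromCols U Up)ᵀ * fromCols U Up = 1)
    (hU' : fromCols U Up * (fromCols U Up)ᵀ = 1)
    (hV : (fromCols V Vp)ᵀ * fromCols V Vp = 1)
    (hV' : fromCols V Vp * (fromCols V Vp)ᵀ = 1)
    (L : Matrix (Fin r ⊕ Fin (p₁ - r)) (Fin r ⊕ Fin (p₂ - r)) ℝ → Matrix (Fin p₁) (Fin p₂) ℝ)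
    (hL : ∀ W, L W = fromCols U Up * W * (fromCols V Vp)ᵀ)
    (Lstar : Matrix (Fin p₁) (Fin p₂) ℝ → Matrix (Fin r ⊕ Fin (p₁ - r)) (Fin r ⊕ Fin (p₂ - r)) ℝ)
    (hLstar : ∀ M, Lstar M = fromBlocks (Uᵀ * M * V) (Uᵀ * M * Vp) (Upᵀ * M * V) 0) :
    ∀ M : Matrix (Fin r ⊕ Fin (p₁ - r)) (Fin r ⊕ Fin (p₂ - r)) ℝ,
      (∃ Z, M = Lstar Z) →
      (1 - R2r) * frob M ≤ frob (Lstar (Astar (A (L M)))) ∧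
      frob (Lstar (Astar (A (L M)))) ≤ (1 + R2r) * frob M :=
  stmt_1_general A Astar hadj R2r hRIP U Up V Vp hU hV L hL Lstar hLstar
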